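/- arXiv:q-alg/9505026 — 2 statements merged into one kernel-verified Lean document; each statement's English description precedes it below -/
import Mathlib

section
/- Let A be a finite-dimensional commutative local Frobenius algebra over an algebraically closed field with nonzero nilpotents and one-dimensional socle, with functional μ and socle element s satisfying μ(s)=1. Then the handle element h = Σ_i a_i b_i equals dim(A)·s, and h² = 0 whenever A has a nonzero nilpotent (since s is nilpotent). Consequently, for every x ∈ A, x·h² = 0. -/
/-!
Since `(a i)` and `(b i)` are dual under `μ`, the coordinates of `x` are `μ (x * b i)`, so
`μ (z * h)` is the trace of multiplication by `z`. For nilpotent `n` and any `y`,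
`μ (n * h * y)` is the trace of the nilpotent map `(n * y) * ·`, hence zero; by nondegeneracy
`n * h = 0`, so `h` lies in the socle, `h = c • s`, and `c = μ h = tr id = dim A`.
Locality makes every non-unit nilpotent; `s` is a non-unit because it kills a nonzero
nilpotent, so `s * s = 0` and therefore `h * h = 0`.
-/

open LinearMap

section DualBases

variable {R A ι : Type*} [CommRing R] [Ring A] [Algebra R A] [Fintype ι] [DecidableEq ι]
  {μ : A →ₗ[R] R} {a : Module.Basis ι R A} {b : ι → A}

theorem Module.Basis.repr_apply_eq_of_dual (hdual : ∀ i j, μ (a i * b j) = if i = j then 1 else 0)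
    (x : A) (j : ι) : a.repr x j = μ (x * b j) := by
  conv_rhs => rw [← a.sum_repr x]
  simp only [Finset.sum_mul, map_sum, smul_mul_assoc, map_smul, hdual, smul_eq_mul, mul_ite,
    mul_one, mul_zero, Finset.sum_ite_eq', Finset.mem_univ, if_true]

theorem apply_mul_sum_mul_eq_trace_mulLeft
    (hdual : ∀ i j, μ (a i * b j) = if i = j then 1 else 0) (z : A) :
    μ (z * ∑ i, a i * b i) = trace R A (mulLeft R z) := by
  rw [trace_eq_matrix_trace R a, Matrix.trace, Finset.mul_sum, map_sum]
  refine Finset.sum_congr rfl fun i _ => ?_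
  rw [Matrix.diag_apply, toMatrix_apply, mulLeft_apply, a.repr_apply_eq_of_dual hdual, mul_assoc]

theorem apply_sum_mul_eq_finrank [StrongRankCondition R]
    (hdual : ∀ i j, μ (a i * b j) = if i = j then 1 else 0) :
    μ (∑ i, a i * b i) = Module.finrank R A := by
  have : Module.Free R A := .of_basis a
  have : Module.Finite R A := .of_basis a
  simpa [mulLeft_one, trace_id] using apply_mul_sum_mul_eq_trace_mulLeft hdual 1

end DualBases

theorem mul_sum_mul_eq_zero_of_isNilpotent {R A ι : Type*} [CommRing R] [IsReduced R]
    [CommRing A] [Algebra R A] [Fintype ι] [DecidableEq ι] {μ : A →ₗ[R] R}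
    (hnd : ∀ x : A, x ≠ 0 → ∃ y : A, μ (x * y) ≠ 0) {a : Module.Basis ι R A} {b : ι → A}
    (hdual : ∀ i j, μ (a i * b j) = if i = j then 1 else 0) {n : A} (hn : IsNilpotent n) :
    n * ∑ i, a i * b i = 0 := by
  by_contra hne
  obtain ⟨y, hy⟩ := hnd _ hne
  have hny : IsNilpotent (mulLeft R (n * y)) :=
    (isNilpotent_mulLeft_iff R _).2 ((Commute.all n y).isNilpotent_mul_right hn)
  apply hy
  rw [mul_right_comm, apply_mul_sum_mul_eq_trace_mulLeft hdual]
  exact (isNilpotent_trace_of_isNilpotent hny).eq_zero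

theorem isNilpotent_of_not_isUnit {F A : Type*} [Field F] [Ring A] [Algebra F A]
    (hloc : ∀ a : A, ∃ (c : F) (n : A), IsNilpotent n ∧ a = algebraMap F A c + n) {x : A}
    (hx : ¬IsUnit x) : IsNilpotent x := by
  obtain ⟨c, n, hn, rfl⟩ := hloc x
  rcases eq_or_ne c 0 with rfl | hc
  · simpa using hn
  · exact absurd (hn.isUnit_add_left_of_commute
      ((algebraMap F A).isUnit_map hc.isUnit) (Algebra.commutes c n).symm) hx

theorem stmt10_general {F A : Type*} [Field F] [CommRing A] [Algebra F A]
    (μ : A →ₗ[F] F) (hnd : ∀ x : A, x ≠ 0 → ∃ y : A, μ (x * y) ≠ 0)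
    (hloc : ∀ a : A, ∃ (c : F) (n : A), IsNilpotent n ∧ a = algebraMap F A c + n)
    (hnil : ∃ n : A, n ≠ 0 ∧ IsNilpotent n)
    (s : A) (hssoc : ∀ a : A, IsNilpotent a → a * s = 0)
    (hsdim : ∀ t : A, (∀ a : A, IsNilpotent a → a * t = 0) → ∃ c : F, t = c • s)
    (hμs : μ s = 1)
    {ι : Type*} [Fintype ι] [DecidableEq ι] (a : Module.Basis ι F A) (b : ι → A)
    (hdual : ∀ i j, μ (a i * b j) = if i = j then 1 else 0) :
    (∑ i, a i * b i) = (Module.finrank F A : F) • s ∧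
    (∑ i, a i * b i) * (∑ i, a i * b i) = 0 ∧
    ∀ x : A, x * ((∑ i, a i * b i) * (∑ i, a i * b i)) = 0 := by
  obtain ⟨c, hc⟩ := hsdim _ fun n hn => mul_sum_mul_eq_zero_of_isNilpotent hnd hdual hn
  have hc_eq : c = Module.finrank F A := by
    simpa [hc, hμs] using apply_sum_mul_eq_finrank hdual
  have hs_nil : IsNilpotent s := by
    obtain ⟨m, hm0, hm⟩ := hnil
    exact isNilpotent_of_not_isUnit hloc fun hu => hm0 ((hu.mul_left_eq_zero).1 (hssoc m hm))
  have hsq : (∑ i, a i * b i) * (∑ i, a i * b i) = 0 := by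
    rw [hc, smul_mul_smul_comm, hssoc s hs_nil, smul_zero]
  exact ⟨hc_eq ▸ hc, hsq, fun x => by rw [hsq, mul_zero]⟩

/-- In a local commutative Frobenius algebra over an algebraically closed field with
a nonzero nilpotent and one-dimensional socle `F·s`, `μ s = 1`: the handle element
`h = ∑ i, a i * b i` equals `dim A • s`, satisfies `h * h = 0`, and hence
`x * h * h = 0` for every `x`. -/
theorem stmt10 {F A : Type*} [Field F] [IsAlgClosed F] [CommRing A] [Algebra F A]
    [FiniteDimensional F A]
    (μ : A →ₗ[F] F) (hnd : ∀ x : A, x ≠ 0 → ∃ y : A, μ (x * y) ≠ 0)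
    (hloc : ∀ a : A, ∃ (c : F) (n : A), IsNilpotent n ∧ a = algebraMap F A c + n)
    (hnil : ∃ n : A, n ≠ 0 ∧ IsNilpotent n)
    (s : A) (hs : s ≠ 0) (hssoc : ∀ a : A, IsNilpotent a → a * s = 0)
    (hsdim : ∀ t : A, (∀ a : A, IsNilpotent a → a * t = 0) → ∃ c : F, t = c • s)
    (hμs : μ s = 1)
    {ι : Type*} [Fintype ι] [DecidableEq ι] (a : Module.Basis ι F A) (b : ι → A)
    (hdual : ∀ i j, μ (a i * b j) = if i = j then 1 else 0) :
    (∑ i, a i * b i) = (Module.finrank F A : F) • s ∧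
    (∑ i, a i * b i) * (∑ i, a i * b i) = 0 ∧
    ∀ x : A, x * ((∑ i, a i * b i) * (∑ i, a i * b i)) = 0 :=
  stmt10_general μ hnd hloc hnil s hssoc hsdim hμs a b hdual
end

section
/- Let (A, μ) be a finite-dimensional commutative local Frobenius algebra over an algebraically closed field with dim A ≥ 2, socle F·s, μ(s) = 1, and unique algebra homomorphism f : A → F. Define Z_g : A → A for genus g ≥ 0 by Z_g(x) = x·h^g where h = Σ_i a_i b_i is the handle element. Then Z_1(x) = dim(A)·f(x)·s and Z_g = 0 for all g ≥ 2. -/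
/-!
The handle element computes traces: `μ (z * h) = tr (z · -)`, read off in the basis `a` with
coordinates `μ (- * b j)`. In a local algebra `z = f z + n` with `n` nilpotent, so
`tr (z · -) = dim A * f z`; also `y * s = f y • s` since the radical kills the socle. Hence
`x * h` and `(dim A * f x) • s` pair identically against every `y` under `μ`, so they are equal
by nondegeneracy. When `dim A ≥ 2` the radical is nonzero and annihilates `s`, so `s` is not a
unit, i.e. `f s = 0`; then `s * h = 0`, which kills `x * h ^ g` for `g ≥ 2`.
-/

open Module LinearMap

section DualBasis

variable {R A ι : Type*} [CommRing R] [Ring A] [Algebra R A] [Fintype ι] [DecidableEq ι]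
  (μ : A →ₗ[R] R) (a : Basis ι R A) (b : ι → A)

theorem Module.Basis.repr_eq_of_dual (hdual : ∀ i j, μ (a i * b j) = if i = j then 1 else 0)
    (z : A) (j : ι) : a.repr z j = μ (z * b j) := by
  conv_rhs => rw [← a.sum_repr z]
  rw [Finset.sum_mul, map_sum]
  simp [hdual]

theorem trace_mulLeft_eq_of_dual (hdual : ∀ i j, μ (a i * b j) = if i = j then 1 else 0)
    (z : A) : trace R A (mulLeft R z) = μ (z * ∑ i, a i * b i) := by
  rw [trace_eq_matrix_trace R a, Matrix.trace, Finset.mul_sum, map_sum]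
  refine Finset.sum_congr rfl fun i _ => ?_
  rw [Matrix.diag_apply, toMatrix_apply, mulLeft_apply, a.repr_eq_of_dual μ b hdual, mul_assoc]

end DualBasis

section Local

variable {F A : Type*} [Field F] [Ring A] [Algebra F A]

theorem AlgHom.apply_algebraMap_add_of_isNilpotent (f : A →ₐ[F] F) (c : F) {n : A}
    (hn : IsNilpotent n) : f (algebraMap F A c + n) = c := by
  rw [map_add, (hn.map f).eq_zero, add_zero, AlgHom.commutes, Algebra.algebraMap_self_apply]

theorem trace_mulLeft_eq_finrank_mul [FiniteDimensional F A]
    (hloc : ∀ a : A, ∃ (c : F) (n : A), IsNilpotent n ∧ a = algebraMap F A c + n)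
    (f : A →ₐ[F] F) (z : A) : trace F A (mulLeft F z) = finrank F A * f z := by
  obtain ⟨c, n, hn, rfl⟩ := hloc z
  have hsplit : mulLeft F (algebraMap F A c + n) = c • LinearMap.id + mulLeft F n := by
    ext w
    simp [add_mul, Algebra.smul_def]
  have hmul_nil : IsNilpotent (mulLeft F n) := by
    obtain ⟨k, hk⟩ := hn
    exact ⟨k, by rw [pow_mulLeft, hk, mulLeft_zero_eq_zero]⟩
  rw [hsplit, map_add, map_smul, trace_id, (isNilpotent_trace_of_isNilpotent hmul_nil).eq_zero,
    f.apply_algebraMap_add_of_isNilpotent c hn, smul_eq_mul, add_zero, mul_comm]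

theorem mul_eq_smul_of_forall_isNilpotent_mul_eq_zero
    (hloc : ∀ a : A, ∃ (c : F) (n : A), IsNilpotent n ∧ a = algebraMap F A c + n)
    {s : A} (hssoc : ∀ a : A, IsNilpotent a → a * s = 0) (f : A →ₐ[F] F) (y : A) :
    y * s = f y • s := by
  obtain ⟨c, n, hn, rfl⟩ := hloc y
  rw [f.apply_algebraMap_add_of_isNilpotent c hn, add_mul, hssoc n hn, add_zero,
    Algebra.smul_def]

theorem isUnit_of_apply_ne_zero
    (hloc : ∀ a : A, ∃ (c : F) (n : A), IsNilpotent n ∧ a = algebraMap F A c + n)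
    (f : A →ₐ[F] F) {z : A} (hz : f z ≠ 0) : IsUnit z := by
  obtain ⟨c, n, hn, rfl⟩ := hloc z
  rw [f.apply_algebraMap_add_of_isNilpotent c hn] at hz
  exact hn.isUnit_add_left_of_commute (hz.isUnit.map (algebraMap F A))
    (Algebra.commutes c n).symm

theorem exists_isNilpotent_ne_zero_of_two_le_finrank [FiniteDimensional F A]
    (hdim : 2 ≤ finrank F A)
    (hloc : ∀ a : A, ∃ (c : F) (n : A), IsNilpotent n ∧ a = algebraMap F A c + n) :
    ∃ n : A, IsNilpotent n ∧ n ≠ 0 := by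
  by_contra! hnil
  have hspan : ∀ w : A, ∃ c : F, c • (1 : A) = w := fun w => by
    obtain ⟨c, n, hn, rfl⟩ := hloc w
    exact ⟨c, by rw [hnil n hn, add_zero, Algebra.algebraMap_eq_smul_one]⟩
  have := finrank_le_one (1 : A) hspan
  omega

end Local

theorem eq_of_forall_apply_mul_eq {R A : Type*} [CommRing R] [Ring A] [Module R A]
    (μ : A →ₗ[R] R) (hnd : ∀ x : A, x ≠ 0 → ∃ y : A, μ (x * y) ≠ 0) {u v : A}
    (huv : ∀ y, μ (u * y) = μ (v * y)) : u = v := by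
  by_contra hne
  obtain ⟨y, hy⟩ := hnd _ (sub_ne_zero.mpr hne)
  exact hy (by rw [sub_mul, map_sub, huv, sub_self])

theorem mul_handle_eq {F A ι : Type*} [Field F] [CommRing A] [Algebra F A]
    [FiniteDimensional F A] (μ : A →ₗ[F] F) (hnd : ∀ x : A, x ≠ 0 → ∃ y : A, μ (x * y) ≠ 0)
    (hloc : ∀ a : A, ∃ (c : F) (n : A), IsNilpotent n ∧ a = algebraMap F A c + n)
    {s : A} (hssoc : ∀ a : A, IsNilpotent a → a * s = 0) (hμs : μ s = 1) (f : A →ₐ[F] F)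
    [Fintype ι] [DecidableEq ι] (a : Basis ι F A) (b : ι → A)
    (hdual : ∀ i j, μ (a i * b j) = if i = j then 1 else 0) (x : A) :
    x * ∑ i, a i * b i = ((finrank F A : F) * f x) • s := by
  refine eq_of_forall_apply_mul_eq μ hnd fun y => ?_
  calc μ (x * (∑ i, a i * b i) * y) = μ (x * y * ∑ i, a i * b i) := by ring_nf
    _ = finrank F A * f x * f y := by
      rw [← trace_mulLeft_eq_of_dual μ a b hdual, trace_mulLeft_eq_finrank_mul hloc, map_mul,
        mul_assoc]
    _ = μ (((finrank F A : F) * f x) • s * y) := by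
      rw [smul_mul_assoc, mul_comm s, mul_eq_smul_of_forall_isNilpotent_mul_eq_zero hloc hssoc,
        map_smul, map_smul, hμs, smul_eq_mul, smul_eq_mul, mul_one]

theorem stmt16_general {F A : Type*} [Field F] [CommRing A] [Algebra F A]
    [FiniteDimensional F A]
    (hdim2 : 2 ≤ Module.finrank F A)
    (μ : A →ₗ[F] F) (hnd : ∀ x : A, x ≠ 0 → ∃ y : A, μ (x * y) ≠ 0)
    (hloc : ∀ a : A, ∃ (c : F) (n : A), IsNilpotent n ∧ a = algebraMap F A c + n)
    (s : A) (hssoc : ∀ a : A, IsNilpotent a → a * s = 0)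
    (hμs : μ s = 1)
    (f : A →ₐ[F] F)
    {ι : Type*} [Fintype ι] [DecidableEq ι] (a : Module.Basis ι F A) (b : ι → A)
    (hdual : ∀ i j, μ (a i * b j) = if i = j then 1 else 0) :
    (∀ x : A, x * (∑ i, a i * b i) ^ 1 = ((Module.finrank F A : F) * f x) • s) ∧
    ∀ g : ℕ, 2 ≤ g → ∀ x : A, x * (∑ i, a i * b i) ^ g = 0 := by
  have genus_one := mul_handle_eq μ hnd hloc hssoc hμs f a b hdual
  have hfs : f s = 0 := by
    obtain ⟨n, hn, hn0⟩ := exists_isNilpotent_ne_zero_of_two_le_finrank hdim2 hloc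
    by_contra hfs
    exact hn0 ((isUnit_of_apply_ne_zero hloc f hfs).mul_left_eq_zero.mp (hssoc n hn))
  have hsh : s * ∑ i, a i * b i = 0 := by rw [genus_one, hfs, mul_zero, zero_smul]
  refine ⟨fun x => by rw [pow_one, genus_one], fun g hg x => ?_⟩
  obtain ⟨k, rfl⟩ := Nat.exists_eq_add_of_le' hg
  calc x * (∑ i, a i * b i) ^ (k + 2)
      = x * (∑ i, a i * b i) * (∑ i, a i * b i) * (∑ i, a i * b i) ^ k := by ring
    _ = 0 := by rw [genus_one x, smul_mul_assoc, hsh, smul_zero, zero_mul]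

/-- In a local commutative Frobenius algebra over an algebraically closed field with
`dim A ≥ 2`, socle `F·s`, `μ s = 1`, and unique algebra homomorphism `f : A → F`:
with handle element `h = ∑ i, a i * b i`, the genus-`g` operator `Z_g x = x * h ^ g`
satisfies `Z_1 x = dim A * f x • s` and `Z_g = 0` for all `g ≥ 2`. -/
theorem stmt16 {F A : Type*} [Field F] [IsAlgClosed F] [CommRing A] [Algebra F A]
    [FiniteDimensional F A]
    (hdim2 : 2 ≤ Module.finrank F A)
    (μ : A →ₗ[F] F) (hnd : ∀ x : A, x ≠ 0 → ∃ y : A, μ (x * y) ≠ 0)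
    (hloc : ∀ a : A, ∃ (c : F) (n : A), IsNilpotent n ∧ a = algebraMap F A c + n)
    (s : A) (hs : s ≠ 0) (hssoc : ∀ a : A, IsNilpotent a → a * s = 0)
    (hsdim : ∀ t : A, (∀ a : A, IsNilpotent a → a * t = 0) → ∃ c : F, t = c • s)
    (hμs : μ s = 1)
    (f : A →ₐ[F] F)
    {ι : Type*} [Fintype ι] [DecidableEq ι] (a : Module.Basis ι F A) (b : ι → A)
    (hdual : ∀ i j, μ (a i * b j) = if i = j then 1 else 0) :
    (∀ x : A, x * (∑ i, a i * b i) ^ 1 = ((Module.finrank F A : F) * f x) • s) ∧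
    ∀ g : ℕ, 2 ≤ g → ∀ x : A, x * (∑ i, a i * b i) ^ g = 0 :=
  stmt16_general hdim2 μ hnd hloc s hssoc hμs f a b hdual
end
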